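/- Let Γ be a Coxeter graph, (W,S) its Coxeter system, A = A_Γ its Artin group, and τ : W → A the set-section of the natural projection θ : A → W defined by τ(w) = σ_{s₁}⋯σ_{s_ℓ} for any reduced expression s₁⋯s_ℓ of w. Let 𝒮^f = {X ⊆ S : W_X finite}. Define a relation ⪯ on A × 𝒮^f by (α,X) ⪯ (β,Y) if X ⊆ Y and α = β·τ(w) for some w ∈ W_Y which is (∅,X)-minimal. Then ⪯ is a partial order relation. -/

import Mathlib

/-- The relators of the Artin group of a Coxeter matrix `M`:
`Π(σ_i,σ_j : m_{i,j}) Π(σ_j,σ_i : m_{i,j})⁻¹` for `i ≠ j`, `m_{i,j} ≠ ∞`. -/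
def ArtinGroup.rels {B : Type*} (M : CoxeterMatrix B) : Set (FreeGroup B) :=
  {r | ∃ i j : B, i ≠ j ∧ M i j ≠ 0 ∧
    r = ((CoxeterSystem.alternatingWord i j (M i j)).map FreeGroup.of).prod *
        (((CoxeterSystem.alternatingWord j i (M i j)).map FreeGroup.of).prod)⁻¹}

/-- The Artin group `A_Γ` of a Coxeter matrix `M`. -/
def ArtinGroup {B : Type*} (M : CoxeterMatrix B) := PresentedGroup (ArtinGroup.rels M)

instance {B : Type*} (M : CoxeterMatrix B) : Group (ArtinGroup M) :=
  inferInstanceAs (Group (PresentedGroup (ArtinGroup.rels M)))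

/-- The generator `σ_s` of the Artin group. -/
def ArtinGroup.sigma {B : Type*} (M : CoxeterMatrix B) (s : B) : ArtinGroup M :=
  PresentedGroup.of (rels := ArtinGroup.rels M) s

/-- The standard parabolic subgroup `W_X` of a Coxeter system. -/
def CoxeterSystem.parabolic {B W : Type*} [Group W] {M : CoxeterMatrix B}
    (cs : CoxeterSystem M W) (X : Set B) : Subgroup W :=
  Subgroup.closure (cs.simple '' X)

/-- `w` is `(∅,X)`-minimal: it has minimal length in the coset `w W_X`. -/
def CoxeterSystem.IsMinimalCosetRep {B W : Type*} [Group W] {M : CoxeterMatrix B}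
    (cs : CoxeterSystem M W) (X : Set B) (w : W) : Prop :=
  ∀ u ∈ cs.parabolic X, cs.length w ≤ cs.length (w * u)

/-!
Reflexivity is witnessed by `w = 1`, and antisymmetry holds because a `(∅,X)`-minimal element
of `W_X` is trivial. Transitivity rests on the additivity `ℓ(vu) = ℓ(v) + ℓ(u)` for `v`
`(∅,Y)`-minimal and `u ∈ W_Y`: it makes `vw` `(∅,X)`-minimal and gives `τ(vw) = τ(v)τ(w)`.
Additivity is proved by induction along a word for `u`, using the strong exchange condition in
the form of Tits' sign cocycle: `W` acts on `W × {±1}`, the generator `s` conjugating the first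
component and flipping the sign exactly at `s`, and for a reflection `t` the sign picked up by
`w` at `t` is `-1` iff `ℓ(wt) < ℓ(w)`.
-/

namespace CoxeterSystem

open List

variable {B W : Type*} [Group W] {M : CoxeterMatrix B} (cs : CoxeterSystem M W)

local prefix:100 "s" => cs.simple
local prefix:100 "π" => cs.wordProd
local prefix:100 "ℓ" => cs.length
local prefix:100 "ris " => cs.rightInvSeq
local prefix:100 "lis " => cs.leftInvSeq

theorem prod_map_alternatingWord_two_mul {G : Type*} [Monoid G] (f : B → G) (i j : B) (p : ℕ) :
    ((alternatingWord i j (2 * p)).map f).prod = (f i * f j) ^ p := by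
  induction p with
  | zero => simp [alternatingWord]
  | succ p ih =>
    rw [show 2 * (p + 1) = 2 * p + 1 + 1 by ring, alternatingWord_succ', alternatingWord_succ']
    simp [ih, pow_succ', mul_assoc]

theorem reverse_alternatingWord_two_mul (i j : B) (p : ℕ) :
    (alternatingWord i j (2 * p)).reverse = alternatingWord j i (2 * p) := by
  induction p with
  | zero => rfl
  | succ p ih =>
    rw [show 2 * (p + 1) = 2 * p + 1 + 1 by ring, alternatingWord_succ, alternatingWord_succ,
      alternatingWord_succ' j i, alternatingWord_succ' j i]
    simp [ih]

theorem leftInvSeq_alternatingWord_two_mul (i j : B) (p : ℕ) :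
    lis (alternatingWord i j (2 * p)) =
      (range (2 * p)).map fun k => π (alternatingWord j i (2 * k + 1)) := by
  refine ext_getElem (by simp) fun k hk _ => ?_
  rw [getElem_leftInvSeq_alternatingWord cs i j p k (by simpa using hk), getElem_map,
    getElem_range]

section SignedConjugation

attribute [local instance] Classical.propDecidable

noncomputable def reflSign (ω : List B) (t : W) : ℤˣ :=
  ((ris ω).map fun r => if r = t then -1 else 1).prod

theorem reflSign_cons (i : B) (ω : List B) (t : W) :
    cs.reflSign (i :: ω) t = (if (π ω)⁻¹ * s i * π ω = t then -1 else 1) * cs.reflSign ω t :=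
  prod_cons

theorem mem_rightInvSeq_of_reflSign_eq_neg_one {ω : List B} {t : W}
    (h : cs.reflSign ω t = -1) : t ∈ ris ω := by
  by_contra ht
  refine absurd h (ne_of_eq_of_ne (prod_eq_one fun x hx => ?_) (by decide))
  obtain ⟨r, hr, rfl⟩ := mem_map.mp hx
  exact if_neg fun hrt : r = t => ht (hrt ▸ hr)

/-- The inversion sequence of the braid word of length `2 m_ij` has period `m_ij`, so every
reflection occurs in it an even number of times. -/
theorem reflSign_alternatingWord (i j : B) (t : W) :
    cs.reflSign (alternatingWord i j (2 * M i j)) t = 1 := by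
  set g : ℕ → ℤˣ := fun k => if π (alternatingWord i j (2 * k + 1)) = t then -1 else 1
  have periodic : ∀ k, g (M i j + k) = g k := fun k => by
    simp only [g, prod_alternatingWord_eq_mul_pow, Nat.not_even_bit1, if_false,
      show (2 * (M i j + k) + 1) / 2 = M i j + k by omega, show (2 * k + 1) / 2 = k by omega,
      pow_add, cs.simple_mul_simple_pow, one_mul]
  rw [reflSign, ← reverse_alternatingWord_two_mul, rightInvSeq_reverse, map_reverse, prod_reverse,
    leftInvSeq_alternatingWord_two_mul, map_map, two_mul, range_add, map_append, prod_append,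
    map_map]
  change ((range (M i j)).map g).prod * ((range (M i j)).map (g ∘ (M i j + ·))).prod = 1
  rw [show g ∘ (M i j + ·) = g from funext periodic, Int.units_mul_self]

noncomputable def signedConjPerm (i : B) : Equiv.Perm (W × ℤˣ) :=
  Function.Involutive.toPerm (fun p => (s i * p.1 * s i, p.2 * if p.1 = s i then -1 else 1))
    fun ⟨t, ε⟩ => by
      by_cases ht : t = s i
      · subst ht
        simp
      · have ht' : t * s i ≠ 1 := by rwa [Ne, mul_eq_one_iff_eq_inv, inv_simple]
        simp [ht, ht', mul_assoc]

@[simp]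
theorem signedConjPerm_apply (i : B) (t : W) (ε : ℤˣ) :
    cs.signedConjPerm i (t, ε) = (s i * t * s i, ε * if t = s i then -1 else 1) :=
  rfl

theorem prod_map_signedConjPerm_apply (ω : List B) (t : W) (ε : ℤˣ) :
    (ω.map cs.signedConjPerm).prod (t, ε) = (π ω * t * (π ω)⁻¹, ε * cs.reflSign ω t) := by
  induction ω with
  | nil => simp [reflSign]
  | cons i ω ih =>
    have hconj : π ω * t * (π ω)⁻¹ = s i ↔ (π ω)⁻¹ * s i * π ω = t := by
      constructor <;> intro h <;> rw [← h] <;> group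
    rw [map_cons, prod_cons, Equiv.Perm.mul_apply, ih, reflSign_cons, wordProd_cons]
    simp only [signedConjPerm_apply, hconj, mul_inv_rev, inv_simple, Prod.mk.injEq]
    constructor
    · group
    · rw [mul_assoc, mul_comm (cs.reflSign ω t)]

theorem isLiftable_signedConjPerm : M.IsLiftable cs.signedConjPerm := fun i j => by
  have hπ : π (alternatingWord i j (2 * M i j)) = 1 := by
    simp [prod_alternatingWord_eq_mul_pow]
  rw [← prod_map_alternatingWord_two_mul]
  ext ⟨t, ε⟩ <;> simp [prod_map_signedConjPerm_apply, hπ, reflSign_alternatingWord]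

noncomputable def signedConj : W →* Equiv.Perm (W × ℤˣ) :=
  cs.lift ⟨cs.signedConjPerm, cs.isLiftable_signedConjPerm⟩

theorem signedConj_wordProd (ω : List B) :
    cs.signedConj (π ω) = (ω.map cs.signedConjPerm).prod := by
  simp [wordProd, map_list_prod, signedConj, map_map, Function.comp_def]

noncomputable def conjSign (w t : W) : ℤˣ := (cs.signedConj w (t, 1)).2

theorem conjSign_wordProd (ω : List B) (t : W) : cs.conjSign (π ω) t = cs.reflSign ω t := by
  simp [conjSign, signedConj_wordProd, prod_map_signedConjPerm_apply]

theorem signedConj_apply (w t : W) (ε : ℤˣ) :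
    cs.signedConj w (t, ε) = (w * t * w⁻¹, ε * cs.conjSign w t) := by
  obtain ⟨ω, rfl⟩ := cs.wordProd_surjective w
  rw [conjSign_wordProd, signedConj_wordProd, prod_map_signedConjPerm_apply]

theorem conjSign_mul (w₁ w₂ t : W) :
    cs.conjSign (w₁ * w₂) t = cs.conjSign w₂ t * cs.conjSign w₁ (w₂ * t * w₂⁻¹) := by
  change (cs.signedConj (w₁ * w₂) (t, 1)).2 = _
  rw [map_mul, Equiv.Perm.mul_apply, signedConj_apply, signedConj_apply, one_mul]

theorem conjSign_one (t : W) : cs.conjSign 1 t = 1 := by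
  simp [conjSign]

theorem conjSign_simple_self (i : B) : cs.conjSign (s i) (s i) = -1 := by
  simp [conjSign, signedConj]

theorem length_mul_lt_of_conjSign_eq_neg_one {w t : W} (h : cs.conjSign w t = -1) :
    ℓ (w * t) < ℓ w := by
  obtain ⟨ω, hω, rfl⟩ := cs.exists_isReduced w
  rw [conjSign_wordProd] at h
  exact (cs.isRightInversion_of_mem_rightInvSeq hω (cs.mem_rightInvSeq_of_reflSign_eq_neg_one h)).2

namespace IsReflection

variable {cs} {t : W}

theorem conjSign_self (ht : cs.IsReflection t) : cs.conjSign t t = -1 := by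
  obtain ⟨v, i, rfl⟩ := ht
  have hinv : cs.conjSign v (s i) * cs.conjSign v⁻¹ (v * s i * v⁻¹) = 1 := by
    rw [← conjSign_mul, inv_mul_cancel, conjSign_one]
  have hconj : v⁻¹ * (v * s i * v⁻¹) * v⁻¹⁻¹ = s i := by group
  rw [conjSign_mul, hconj, conjSign_mul, mul_inv_cancel_right, conjSign_simple_self, neg_one_mul,
    mul_neg, mul_comm, hinv]

/-- The strong exchange condition. -/
theorem conjSign_eq_neg_one_iff (ht : cs.IsReflection t) (w : W) :
    cs.conjSign w t = -1 ↔ ℓ (w * t) < ℓ w := by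
  refine ⟨cs.length_mul_lt_of_conjSign_eq_neg_one, fun hlt => ?_⟩
  have hwt : cs.conjSign (w * t) t = 1 := by
    refine (Int.units_eq_one_or _).resolve_right fun h => ?_
    have := cs.length_mul_lt_of_conjSign_eq_neg_one h
    rw [mul_assoc, ht.mul_self, mul_one] at this
    omega
  calc cs.conjSign w t = cs.conjSign (w * t * t) t := by rw [mul_assoc, ht.mul_self, mul_one]
    _ = -1 := by rw [conjSign_mul, mul_inv_cancel_right, hwt, mul_one, ht.conjSign_self]

theorem conjSign_eq_one_iff (ht : cs.IsReflection t) (w : W) :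
    cs.conjSign w t = 1 ↔ ℓ w < ℓ (w * t) := by
  have hne := ht.length_mul_left_ne w
  constructor
  · intro h
    by_contra hle
    have := (ht.conjSign_eq_neg_one_iff w).mpr (by omega)
    rw [h] at this
    exact absurd this (by decide)
  · exact fun hlt => (Int.units_eq_one_or _).resolve_right fun h => by
      have := (ht.conjSign_eq_neg_one_iff w).mp h
      omega

end IsReflection

end SignedConjugation

theorem parabolic_mono {X Y : Set B} (h : X ⊆ Y) : cs.parabolic X ≤ cs.parabolic Y :=
  Subgroup.closure_mono (Set.image_mono h)

theorem simple_mem_parabolic {X : Set B} {i : B} (hi : i ∈ X) : s i ∈ cs.parabolic X :=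
  Subgroup.subset_closure ⟨i, hi, rfl⟩

theorem isMinimalCosetRep_one (X : Set B) : cs.IsMinimalCosetRep X 1 := fun u _ => by
  rw [length_one]
  exact Nat.zero_le _

namespace IsMinimalCosetRep

variable {cs} {X : Set B} {v : W}

theorem length_mul_simple_of_length_mul (hv : cs.IsMinimalCosetRep X v) {u : W}
    (hu : u ∈ cs.parabolic X) {i : B} (hi : i ∈ X) (huv : ℓ (v * u) = ℓ v + ℓ u) :
    ℓ (v * (u * s i)) = ℓ v + ℓ (u * s i) := by
  rw [← mul_assoc]
  have hvui := cs.length_mul_simple (v * u) i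
  rcases cs.length_mul_simple u i with hui | hui
  -- `s i` is not a descent of `v * u`: it is none of `u`, and `v` is not shortened by the
  -- reflection `u * s i * u⁻¹ ∈ W_X`
  · have hu_sign : cs.conjSign u (s i) = 1 :=
      ((cs.isReflection_simple i).conjSign_eq_one_iff u).mpr (by omega)
    have hr : cs.IsReflection (u * s i * u⁻¹) := (cs.isReflection_simple i).conj u
    have hv_sign : cs.conjSign v (u * s i * u⁻¹) = 1 := by
      refine (hr.conjSign_eq_one_iff v).mpr (lt_of_le_of_ne ?_ (hr.length_mul_left_ne v).symm)
      exact hv _ (mul_mem (mul_mem hu (cs.simple_mem_parabolic hi)) (inv_mem hu))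
    have := ((cs.isReflection_simple i).conjSign_eq_one_iff (v * u)).mp
      (by rw [conjSign_mul, hu_sign, hv_sign, mul_one])
    omega
  · have := cs.length_mul_le v (u * s i)
    rw [← mul_assoc] at this
    omega

theorem length_mul (hv : cs.IsMinimalCosetRep X v) {u : W} (hu : u ∈ cs.parabolic X) :
    ℓ (v * u) = ℓ v + ℓ u := by
  induction hu using Subgroup.closure_induction_right with
  | one => simp
  | mul_right u hu _ hi ih =>
    obtain ⟨i, hi, rfl⟩ := hi
    exact hv.length_mul_simple_of_length_mul hu hi ih
  | mul_inv_cancel u hu _ hi ih =>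
    obtain ⟨i, hi, rfl⟩ := hi
    rw [inv_simple]
    exact hv.length_mul_simple_of_length_mul hu hi ih

theorem mul {Y : Set B} {w : W} (hv : cs.IsMinimalCosetRep Y v) (hw : cs.IsMinimalCosetRep X w)
    (hwY : w ∈ cs.parabolic Y) (hXY : X ⊆ Y) : cs.IsMinimalCosetRep X (v * w) := fun u hu => by
  rw [hv.length_mul hwY, mul_assoc, hv.length_mul (mul_mem hwY (cs.parabolic_mono hXY hu))]
  exact Nat.add_le_add_left (hw u hu) _

theorem eq_one_of_mem (hv : cs.IsMinimalCosetRep X v) (hvX : v ∈ cs.parabolic X) : v = 1 := by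
  have := hv v⁻¹ (inv_mem hvX)
  rwa [mul_inv_cancel, length_one, Nat.le_zero, length_eq_zero_iff] at this

end IsMinimalCosetRep

def IsReducedWordSection {G : Type*} [Monoid G] (τ : W → G) (f : B → G) : Prop :=
  ∀ (w : W) (ω : List B), cs.IsReduced ω → π ω = w → τ w = (ω.map f).prod

namespace IsReducedWordSection

variable {cs} {G : Type*} [Monoid G] {τ : W → G} {f : B → G}

theorem map_one (hτ : cs.IsReducedWordSection τ f) : τ 1 = 1 :=
  hτ 1 [] (by simp [IsReduced]) rfl

theorem map_mul (hτ : cs.IsReducedWordSection τ f) {u v : W} (h : ℓ (u * v) = ℓ u + ℓ v) :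
    τ (u * v) = τ u * τ v := by
  obtain ⟨α, hα, rfl⟩ := cs.exists_isReduced u
  obtain ⟨β, hβ, rfl⟩ := cs.exists_isReduced v
  have hαβ : cs.IsReduced (α ++ β) := by
    rw [IsReduced, wordProd_append, h, hα, hβ, length_append]
  rw [hτ _ _ hαβ (wordProd_append ..), hτ _ α hα rfl, hτ _ β hβ rfl, map_append, prod_append]

end IsReducedWordSection

end CoxeterSystem

/-- given the set-section `τ : W → A_Γ` of `θ` (defined on each `w` via any
reduced expression of `w`), the relation `(α,X) ⪯ (β,Y)` iff `X ⊆ Y` and `α = β·τ(w)` for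
some `(∅,X)`-minimal `w ∈ W_Y`, is a partial order on `A × 𝒮^f`. -/
theorem stmt_11 {B W : Type*} [Group W] {M : CoxeterMatrix B}
    (cs : CoxeterSystem M W) (τ : W → ArtinGroup M)
    (hτ : ∀ (w : W) (ω : List B), cs.IsReduced ω → cs.wordProd ω = w →
      τ w = (ω.map (ArtinGroup.sigma M)).prod) :
    IsPartialOrder {p : ArtinGroup M × Set B // ((cs.parabolic p.2 : Set W)).Finite}
      (fun a b => a.1.2 ⊆ b.1.2 ∧
        ∃ w ∈ cs.parabolic b.1.2, cs.IsMinimalCosetRep a.1.2 w ∧ a.1.1 = b.1.1 * τ w) := by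
  have hτ : cs.IsReducedWordSection τ (ArtinGroup.sigma M) := hτ
  refine { refl := fun a => ?_, trans := ?_, antisymm := ?_ }
  · exact ⟨subset_rfl, 1, one_mem _, cs.isMinimalCosetRep_one _, by rw [hτ.map_one, mul_one]⟩
  · rintro a b c ⟨hXY, w, hwY, hw, hab⟩ ⟨hYZ, v, hvZ, hv, hbc⟩
    refine ⟨hXY.trans hYZ, v * w, mul_mem hvZ (cs.parabolic_mono hYZ hwY), hv.mul hw hwY hXY, ?_⟩
    rw [hab, hbc, hτ.map_mul (hv.length_mul hwY), mul_assoc]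
  · rintro ⟨⟨α, X⟩, _⟩ ⟨⟨β, Y⟩, _⟩ ⟨hXY, w, hwY, hw, hαβ⟩ ⟨hYX, -⟩
    obtain rfl := hXY.antisymm hYX
    rw [hw.eq_one_of_mem hwY, hτ.map_one, mul_one] at hαβ
    subst hαβ
    rfl
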